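/- Assume W is finite. For I ⊆ B, let Q_I := Σ_{J : I ⊊ J ⊆ B} P_J (the sum of the subspaces P_J over subsets J strictly containing I). Then Q_I ⊆ P_I, and the ℂ-vector space dimension of the quotient P_I / Q_I equals the number of elements w ∈ W with D_L(w) = I. -/

import Mathlib

open scoped Classical

noncomputable section

namespace HGA

variable {B : Type*} {W : Type*} [Group W] {M : CoxeterMatrix B}

/-- `σ_i` : the linear extension to `ℂ[W]` of right multiplication by the simple
reflection `s_i`. -/
def sigmaOp (cs : CoxeterSystem M W) (i : B) : Module.End ℂ (MonoidAlgebra ℂ W) :=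
  (Finsupp.lift (MonoidAlgebra ℂ W) ℂ W fun w =>
    MonoidAlgebra.single (w * cs.simple i) (1 : ℂ)).comp (MonoidAlgebra.coeffLinearEquiv ℂ).toLinearMap

/-- `π_i` : the antisorting (0-Hecke) operator: on a basis element `w` it gives `w * s_i`
if `i` is not a right descent of `w`, and `w` otherwise. -/
def piOp (cs : CoxeterSystem M W) (i : B) : Module.End ℂ (MonoidAlgebra ℂ W) :=
  (Finsupp.lift (MonoidAlgebra ℂ W) ℂ W fun w =>
    if cs.IsRightDescent w i then MonoidAlgebra.single w (1 : ℂ)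
    else MonoidAlgebra.single (w * cs.simple i) (1 : ℂ)).comp (MonoidAlgebra.coeffLinearEquiv ℂ).toLinearMap

/-- `π̄_i` : the sorting operator: on a basis element `w` it gives `w * s_i`
if `i` is a right descent of `w`, and `w` otherwise. -/
def piBarOp (cs : CoxeterSystem M W) (i : B) : Module.End ℂ (MonoidAlgebra ℂ W) :=
  (Finsupp.lift (MonoidAlgebra ℂ W) ℂ W fun w =>
    if cs.IsRightDescent w i then MonoidAlgebra.single (w * cs.simple i) (1 : ℂ)
    else MonoidAlgebra.single w (1 : ℂ)).comp (MonoidAlgebra.coeffLinearEquiv ℂ).toLinearMap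

/-- `P_I` : the subspace of vectors of `ℂ[W]` that are antisymmetric on the left
for every `i ∈ I`, i.e. `s_i · v = −v` (left multiplication in `ℂ[W]`) for all `i ∈ I`. -/
def PSub (cs : CoxeterSystem M W) (I : Set B) : Submodule ℂ (MonoidAlgebra ℂ W) where
  carrier := {v | ∀ i ∈ I, MonoidAlgebra.single (cs.simple i) (1 : ℂ) * v = -v}
  add_mem' := by
    intro a b ha hb i hi
    rw [mul_add, ha i hi, hb i hi, neg_add]
  zero_mem' := by
    intro i hi
    simp
  smul_mem' := by
    intro c v hv i hi
    rw [Algebra.mul_smul_comm, hv i hi, smul_neg]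

/-- `Q_I` : the sum of the subspaces `P_J` over the subsets `J` strictly containing `I`. -/
def QSub (cs : CoxeterSystem M W) (I : Set B) : Submodule ℂ (MonoidAlgebra ℂ W) :=
  ⨆ J ∈ {J : Set B | I ⊂ J}, PSub cs J

end HGA

/-!
For `w ∈ W` let `c_w := ∑_{u ∈ W_D} (-1)^ℓ(u) u w ∈ ℂ[W]`, the alternating sum over the parabolic
subgroup of `D = D_L(w)`. It lies in `P_{D_L(w)}`, and `w` is its unique longest term because
`ℓ(u w) = ℓ(w) - ℓ(u)` for `u ∈ W_D` whenever `D ⊆ D_L(w)`. On the other hand, a longest `x` in the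
support of a nonzero `v ∈ P_J` satisfies `J ⊆ D_L(x)`, so restricting coefficients to
`{x | J ⊆ D_L(x)}` is injective on `P_J`. With triangularity this makes the `c_w` with
`J ⊆ D_L(w)` a basis of `P_J`; hence `Q_I` is spanned by the `c_w` with `I ⊊ D_L(w)`, and
`P_I / Q_I` has a basis indexed by `{w | D_L(w) = I}`.

The length formula comes from Tits' reflection cocycle: `s_i ↦ (δ_{s_i}, s_i)`, where `δ_t : W → ℤˣ`
is `-1` at `t` only, extends to a homomorphism `W → (W → ℤˣ) ⋊ W` whose first component is `-1`
exactly at the left inversions.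
-/

namespace SemidirectProduct

variable {N G : Type*} [CommGroup N] [Group G] {φ : G →* MulAut N}

theorem left_pow (g : N ⋊[φ] G) (k : ℕ) :
    (g ^ k).left = ∏ e ∈ Finset.range k, φ (g.right ^ e) g.left := by
  induction k with
  | zero => rfl
  | succ k ih =>
    rw [pow_succ, mul_left, ih, Finset.prod_range_succ, ← rightHom_eq_right, map_pow]

end SemidirectProduct

section conjArrow

variable {W : Type*} [Group W]

def conjArrow : W →* MulAut (W → ℤˣ) :=
  mulAutArrow.comp (ConjAct.toConjAct : W ≃* ConjAct W).toMonoidHom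

@[simp] theorem conjArrow_apply (x : W) (f : W → ℤˣ) (t : W) :
    conjArrow x f t = f (x⁻¹ * t * x) := by
  change f ((ConjAct.toConjAct x)⁻¹ • t) = _
  rw [← map_inv, ConjAct.toConjAct_smul, inv_inv]

theorem conjArrow_mulSingle (x t : W) (u : ℤˣ) :
    conjArrow x (Pi.mulSingle t u) = Pi.mulSingle (x * t * x⁻¹) u := by
  funext y
  simp only [conjArrow_apply, Pi.mulSingle_apply]
  congr 1
  apply propext
  constructor <;> rintro rfl <;> group

end conjArrow

namespace CoxeterSystem

variable {B W : Type*} [Group W] {M : CoxeterMatrix B} (cs : CoxeterSystem M W)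

local prefix:100 "s" => cs.simple
local prefix:100 "ℓ" => cs.length
local prefix:100 "π" => cs.wordProd
local prefix:100 "lis " => cs.leftInvSeq

def leftDescentSet (w : W) : Set B := {i | cs.IsLeftDescent w i}

def reflectionGen (i : B) : (W → ℤˣ) ⋊[conjArrow] W := ⟨Pi.mulSingle (s i) (-1), s i⟩

/- With `x = s_i s_j`, the first component of `(reflectionGen i * reflectionGen j) ^ m` is
`∏_{k < 2m} δ_{x^k s_i}`; as `x^m = 1` every factor occurs twice, and `δ_t² = 1`. -/
theorem isLiftable_reflectionGen : M.IsLiftable cs.reflectionGen := by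
  intro i j
  set x := s i * s j
  set f : ℕ → W → ℤˣ := fun k => Pi.mulSingle (x ^ k * s i) (-1)
  have hconj : ∀ e : ℕ, s i * (x⁻¹) ^ e = x ^ e * s i := fun e =>
    (SemiconjBy.pow_right (by simp [SemiconjBy, x, mul_assoc]) e).eq
  have hterm : ∀ e : ℕ, conjArrow (x ^ e) (cs.reflectionGen i * cs.reflectionGen j).left =
      f (2 * e) * f (2 * e + 1) := by
    intro e
    simp only [reflectionGen, SemidirectProduct.mul_left, conjArrow_mulSingle, map_mul,
      cs.inv_simple, ← inv_pow, f]
    congr 2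
    · rw [mul_assoc, hconj, ← mul_assoc, ← pow_add, two_mul]
    · rw [show s i * s j * s i = x * s i from rfl, mul_assoc, mul_assoc, hconj, ← mul_assoc,
        ← mul_assoc, ← pow_succ, ← pow_add, two_mul, add_right_comm]
  have hpair : ∀ m : ℕ, ∏ e ∈ Finset.range m, f (2 * e) * f (2 * e + 1) =
      ∏ k ∈ Finset.range (2 * m), f k := by
    intro m
    induction m with
    | zero => rfl
    | succ m ih => rw [Finset.prod_range_succ, ih, mul_add, Finset.prod_range_succ,
        Finset.prod_range_succ, mul_assoc]
  have hperiod : ∀ k, f (M i j + k) = f k := fun k => by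
    simp only [f, pow_add, cs.simple_mul_simple_pow, one_mul, x]
  ext : 1
  · rw [SemidirectProduct.left_pow, SemidirectProduct.one_left]
    have hright : (cs.reflectionGen i * cs.reflectionGen j).right = x := rfl
    rw [hright, Finset.prod_congr rfl fun e _ => hterm e, hpair, two_mul, Finset.prod_range_add]
    simp only [hperiod]
    funext t
    exact Int.units_mul_self _
  · rw [← SemidirectProduct.rightHom_eq_right, map_pow]
    exact cs.simple_mul_simple_pow i j

def inversionHom : W →* (W → ℤˣ) ⋊[conjArrow] W :=
  cs.lift ⟨cs.reflectionGen, cs.isLiftable_reflectionGen⟩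

theorem right_inversionHom (w : W) : (cs.inversionHom w).right = w := by
  have : SemidirectProduct.rightHom.comp cs.inversionHom = MonoidHom.id W :=
    cs.ext_simple fun i => by simp [inversionHom, reflectionGen]
  exact DFunLike.congr_fun this w

def inversionSign (w : W) : W → ℤˣ := (cs.inversionHom w).left

theorem inversionSign_mul (x y : W) :
    cs.inversionSign (x * y) = cs.inversionSign x * conjArrow x (cs.inversionSign y) := by
  rw [inversionSign, map_mul, SemidirectProduct.mul_left, right_inversionHom]
  rfl

theorem inversionSign_mul_apply (x y t : W) :
    cs.inversionSign (x * y) t = cs.inversionSign x t * cs.inversionSign y (x⁻¹ * t * x) := by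
  rw [inversionSign_mul, Pi.mul_apply, conjArrow_apply]

theorem inversionSign_simple (i : B) : cs.inversionSign (s i) = Pi.mulSingle (s i) (-1) := by
  simp [inversionSign, inversionHom, reflectionGen]

theorem inversionSign_wordProd (ω : List B) :
    cs.inversionSign (π ω) = ((lis ω).map fun t => Pi.mulSingle t (-1)).prod := by
  induction ω with
  | nil => simp [inversionSign]
  | cons i ω ih =>
    rw [wordProd_cons, inversionSign_mul, inversionSign_simple, ih, map_list_prod, List.map_map,
      leftInvSeq, List.map_cons, List.prod_cons, List.map_map]
    congr 3
    funext u
    simp [conjArrow_mulSingle]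

theorem mem_leftInvSeq_of_inversionSign_ne_one {ω : List B} {t : W}
    (h : cs.inversionSign (π ω) t ≠ 1) : t ∈ lis ω := by
  contrapose! h
  rw [inversionSign_wordProd, Pi.list_prod_apply, List.map_map]
  refine List.prod_eq_one fun _ hx => ?_
  obtain ⟨u, hu, rfl⟩ := List.mem_map.mp hx
  exact Pi.mulSingle_eq_of_ne (ne_of_mem_of_not_mem hu h).symm _

theorem isLeftInversion_of_inversionSign_ne_one {w t : W} (h : cs.inversionSign w t ≠ 1) :
    cs.IsLeftInversion w t := by
  obtain ⟨ω, hω, rfl⟩ := cs.exists_isReduced w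
  exact cs.isLeftInversion_of_mem_leftInvSeq hω (cs.mem_leftInvSeq_of_inversionSign_ne_one h)

theorem inversionSign_simple_of_isLeftDescent {w : W} {i : B} (h : cs.IsLeftDescent w i) :
    cs.inversionSign w (s i) = -1 := by
  refine (Int.units_eq_one_or _).resolve_left fun hw => ?_
  have hsw : cs.inversionSign (s i * w) (s i) ≠ 1 := by
    rw [inversionSign_mul_apply, inversionSign_simple, inv_simple, simple_mul_simple_self, one_mul,
      hw, Pi.mulSingle_eq_same]
    decide
  have := (cs.isLeftInversion_of_inversionSign_ne_one hsw).2
  rw [simple_mul_simple_cancel_left] at this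
  exact (lt_asymm h this).elim

theorem exists_isReduced_sublist (ω : List B) :
    ∃ ω' : List B, ω'.Sublist ω ∧ cs.IsReduced ω' ∧ π ω' = π ω := by
  induction ω with
  | nil => exact ⟨[], List.Sublist.slnil, by simp [IsReduced], rfl⟩
  | cons k ω ih =>
    obtain ⟨β, hβω, hβ, hπ⟩ := ih
    rcases cs.length_simple_mul (π β) k with hup | hdown
    · refine ⟨k :: β, hβω.cons_cons k, ?_, by rw [wordProd_cons, wordProd_cons, hπ]⟩
      rw [IsReduced, wordProd_cons, hup, hβ.eq, List.length_cons]
    · have hmem : s k ∈ lis β := cs.mem_leftInvSeq_of_inversionSign_ne_one <| by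
        rw [cs.inversionSign_simple_of_isLeftDescent (cs.isLeftDescent_iff.2 hdown)]
        decide
      obtain ⟨j, hj, hget⟩ := List.mem_iff_getElem.mp hmem
      rw [length_leftInvSeq] at hj
      have hdel : s k * π β = π (β.eraseIdx j) := by
        rw [← getD_leftInvSeq_mul_wordProd, List.getD_eq_getElem _ _ (by simpa using hj), hget]
      refine ⟨β.eraseIdx j, ((List.eraseIdx_sublist β j).trans hβω).cons k, ?_, ?_⟩
      · have := List.length_eraseIdx_add_one hj
        rw [IsReduced, ← hdel]
        have := hβ.eq
        omega
      · rw [wordProd_cons, ← hπ, hdel]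

def parabolicSubgroup (D : Set B) : Subgroup W := Subgroup.closure (cs.simple '' D)

theorem exists_isReduced_of_mem_parabolicSubgroup {D : Set B} {p : W}
    (hp : p ∈ cs.parabolicSubgroup D) :
    ∃ ω : List B, (∀ i ∈ ω, i ∈ D) ∧ cs.IsReduced ω ∧ π ω = p := by
  have : ∃ ω : List B, (∀ i ∈ ω, i ∈ D) ∧ π ω = p := by
    induction hp using Subgroup.closure_induction with
    | mem _ hx =>
      obtain ⟨i, hi, rfl⟩ := hx
      exact ⟨[i], by simpa using hi, wordProd_singleton cs i⟩
    | one => exact ⟨[], by simp, wordProd_nil cs⟩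
    | mul _ _ _ _ hx hy =>
      obtain ⟨ω₁, h₁, rfl⟩ := hx
      obtain ⟨ω₂, h₂, rfl⟩ := hy
      exact ⟨ω₁ ++ ω₂, fun i hi => (List.mem_append.mp hi).elim (h₁ i) (h₂ i), wordProd_append ..⟩
    | inv _ _ hx =>
      obtain ⟨ω, h, rfl⟩ := hx
      exact ⟨ω.reverse, fun i hi => h i (List.mem_reverse.mp hi), wordProd_reverse ..⟩
  obtain ⟨ω, hωD, rfl⟩ := this
  obtain ⟨ω', hsub, hred, hπ⟩ := cs.exists_isReduced_sublist ω
  exact ⟨ω', fun i hi => hωD i (hsub.subset hi), hred, hπ⟩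

theorem length_wordProd_inv_mul_add_length {ω : List B} (hω : cs.IsReduced ω) {w : W}
    (hw : ∀ i ∈ ω, cs.IsLeftDescent w i) : ℓ ((π ω)⁻¹ * w) + ω.length = ℓ w := by
  induction ω with
  | nil => simp
  | cons j ω ih =>
    have hω₀ : cs.IsReduced ω := by simpa using hω.drop 1
    set p₁ := (π ω)⁻¹
    set t := p₁ * s j * p₁⁻¹
    have hp : (π (j :: ω))⁻¹ = t * p₁ := by
      rw [wordProd_cons, mul_inv_rev, inv_simple, inv_mul_cancel_right]
    have hp₁ : cs.inversionSign p₁ t = 1 := by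
      by_contra h
      have := (cs.isLeftInversion_of_inversionSign_ne_one h).2
      rw [← hp, length_inv, length_inv, hω.eq, hω₀.eq, List.length_cons] at this
      omega
    -- `t` is not a left inversion of `p₁`, but `p₁⁻¹ t p₁ = s_j` is one of `w`
    have hpw : cs.inversionSign (p₁ * w) t ≠ 1 := by
      rw [inversionSign_mul_apply, hp₁, show p₁⁻¹ * t * p₁ = s j by simp only [t]; group,
        cs.inversionSign_simple_of_isLeftDescent (hw j List.mem_cons_self)]
      decide
    have hlt := (cs.isLeftInversion_of_inversionSign_ne_one hpw).2
    have hge := cs.length_le_length_mul_add_left (π (j :: ω))⁻¹ w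
    rw [← mul_assoc, ← hp] at hlt
    rw [length_inv, hω.eq] at hge
    have := ih hω₀ fun i hi => hw i (List.mem_cons_of_mem j hi)
    rw [List.length_cons] at hge ⊢
    omega

theorem length_mul_add_length_of_mem_parabolicSubgroup {D : Set B} {w : W}
    (hw : D ⊆ cs.leftDescentSet w) {p : W} (hp : p ∈ cs.parabolicSubgroup D) :
    ℓ (p * w) + ℓ p = ℓ w := by
  obtain ⟨ω, hωD, hω, hπ⟩ := cs.exists_isReduced_of_mem_parabolicSubgroup (inv_mem hp)
  have := cs.length_wordProd_inv_mul_add_length hω fun i hi => hw (hωD i hi)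
  rwa [hπ, inv_inv, ← hω.eq, hπ, length_inv] at this

end CoxeterSystem

theorem Nat.card_subset_eq_card_ssubset_add_card_eq {α β : Type*} [Finite α] (f : α → Set β)
    (s : Set β) : Nat.card {a // s ⊆ f a} = Nat.card {a // s ⊂ f a} + Nat.card {a // f a = s} := by
  have := Fintype.ofFinite α
  have hsplit : ∀ a, s ⊆ f a ↔ s ⊂ f a ∨ f a = s := fun a =>
    subset_iff_ssubset_or_eq.trans (or_congr_right eq_comm)
  rw [Nat.card_congr (Equiv.subtypeEquivRight hsplit), Nat.card_eq_fintype_card,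
    Nat.card_eq_fintype_card, Nat.card_eq_fintype_card, Fintype.card_subtype_or_disjoint]
  exact fun r hp hq a hr => (hp a hr).ne (hq a hr).symm

namespace HGA

open Module Submodule

variable {B W : Type*} [Group W] {M : CoxeterMatrix B}

section

variable (cs : CoxeterSystem M W)

local prefix:100 "ℓ" => cs.length

theorem mem_PSub_iff {J : Set B} {v : MonoidAlgebra ℂ W} :
    v ∈ PSub cs J ↔ ∀ i ∈ J, ∀ x, v.coeff (cs.simple i * x) = -v.coeff x := by
  refine forall₂_congr fun i _ => ?_
  rw [← MonoidAlgebra.coeff_inj, Finsupp.ext_iff]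
  simp only [MonoidAlgebra.coeff_single_mul_apply, cs.inv_simple, one_mul,
    MonoidAlgebra.coeff_neg, Finsupp.neg_apply]

theorem PSub_anti {J D : Set B} (h : J ⊆ D) : PSub cs D ≤ PSub cs J :=
  fun _ hv i hi => hv i (h hi)

theorem QSub_le_PSub (I : Set B) : QSub cs I ≤ PSub cs I :=
  iSup₂_le fun _ hJ => PSub_anti cs hJ.le

theorem isLeftDescent_of_mem_PSub {J : Set B} {v : MonoidAlgebra ℂ W} (hv : v ∈ PSub cs J)
    {w : W} (hw : v.coeff w ≠ 0) (hmax : ∀ x, v.coeff x ≠ 0 → ℓ x ≤ ℓ w) {i : B} (hi : i ∈ J) :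
    cs.IsLeftDescent w i := by
  refine lt_of_le_of_ne (hmax _ ?_) (cs.length_simple_mul_ne w i)
  rw [(mem_PSub_iff cs).1 hv i hi w]
  exact neg_ne_zero.2 hw

theorem eq_zero_of_mem_PSub {J : Set B} {v : MonoidAlgebra ℂ W} (hv : v ∈ PSub cs J)
    (h : ∀ w, J ⊆ cs.leftDescentSet w → v.coeff w = 0) : v = 0 := by
  by_contra hv0
  obtain ⟨w, hw, hmax⟩ := v.coeff.support.exists_max_image cs.length
    (Finsupp.support_nonempty_iff.2 (by simpa using hv0))
  rw [Finsupp.mem_support_iff] at hw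
  exact hw (h w fun i hi => isLeftDescent_of_mem_PSub cs hv hw
    (fun x hx => hmax x (Finsupp.mem_support_iff.2 hx)) hi)

section Finite

variable [Finite W]

/-- `∑_{u ∈ W_D} (-1)^ℓ(u) u w`, given by its coefficients. -/
def signedCosetSum (D : Set B) (w : W) : MonoidAlgebra ℂ W :=
  .ofCoeff <| Finsupp.equivFunOnFinite.symm fun x =>
    if x * w⁻¹ ∈ cs.parabolicSubgroup D then (-1) ^ ℓ (x * w⁻¹) else 0

theorem coeff_signedCosetSum (D : Set B) (w x : W) :
    (signedCosetSum cs D w).coeff x =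
      if x * w⁻¹ ∈ cs.parabolicSubgroup D then (-1) ^ ℓ (x * w⁻¹) else 0 := rfl

theorem signedCosetSum_mem_PSub (D : Set B) (w : W) : signedCosetSum cs D w ∈ PSub cs D := by
  rw [mem_PSub_iff]
  intro i hi x
  have hs : cs.simple i ∈ cs.parabolicSubgroup D := Subgroup.subset_closure ⟨i, hi, rfl⟩
  rw [coeff_signedCosetSum, coeff_signedCosetSum, mul_assoc, Subgroup.mul_mem_cancel_left _ hs]
  split_ifs
  · rcases cs.length_simple_mul (x * w⁻¹) i with h | h
    · rw [h, pow_succ, mul_neg_one]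
    · rw [← h, pow_succ, mul_neg_one, neg_neg]
  · simp

theorem coeff_signedCosetSum_self (D : Set B) (w : W) : (signedCosetSum cs D w).coeff w = 1 := by
  simp [coeff_signedCosetSum, one_mem]

theorem length_lt_of_coeff_signedCosetSum_ne_zero {D : Set B} {w x : W}
    (hD : D ⊆ cs.leftDescentSet w) (hx : (signedCosetSum cs D w).coeff x ≠ 0) (hxw : x ≠ w) :
    ℓ x < ℓ w := by
  rw [coeff_signedCosetSum, ne_eq, ite_eq_right_iff, Classical.not_imp] at hx
  have hlen := cs.length_mul_add_length_of_mem_parabolicSubgroup hD hx.1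
  have hpos : ℓ (x * w⁻¹) ≠ 0 := by
    rwa [ne_eq, cs.length_eq_zero_iff, mul_inv_eq_one]
  rw [inv_mul_cancel_right] at hlen
  omega

def descentVec (w : W) : MonoidAlgebra ℂ W := signedCosetSum cs (cs.leftDescentSet w) w

theorem linearIndependent_descentVec : LinearIndependent ℂ (descentVec cs) := by
  have := Fintype.ofFinite W
  rw [Fintype.linearIndependent_iff]
  intro g hg
  by_contra! hne
  obtain ⟨w, hw, hmax⟩ := (Finset.univ.filter (g · ≠ 0)).exists_max_image cs.length
    (by simpa [Finset.filter_nonempty_iff] using hne)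
  rw [Finset.mem_filter] at hw
  have hcoeff := congrArg (fun v => v.coeff w) hg
  simp only [MonoidAlgebra.coeff_sum, MonoidAlgebra.coeff_smul, Finsupp.coe_finsetSum,
    Finset.sum_apply, Finsupp.smul_apply, smul_eq_mul, MonoidAlgebra.coeff_zero,
    Finsupp.coe_zero, Pi.zero_apply] at hcoeff
  rw [Finset.sum_eq_single w, descentVec, coeff_signedCosetSum_self, mul_one] at hcoeff
  · exact hw.2 hcoeff
  · intro x _ hxw
    by_cases hgx : g x = 0
    · rw [hgx, zero_mul]
    by_contra hx
    have := length_lt_of_coeff_signedCosetSum_ne_zero cs subset_rfl (right_ne_zero_of_mul hx)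
      (Ne.symm hxw)
    exact (hmax x (by simp [hgx])).not_gt this
  · simp

theorem finrank_span_descentVec (S : Set W) :
    finrank ℂ (span ℂ (descentVec cs '' S)) = Nat.card S := by
  have := Fintype.ofFinite W
  have hli : LinearIndependent ℂ fun w : S => descentVec cs w :=
    (linearIndependent_descentVec cs).comp _ Subtype.val_injective
  rw [Set.image_eq_range, finrank_span_eq_card hli, Nat.card_eq_fintype_card]

theorem finrank_PSub_le (J : Set B) :
    finrank ℂ (PSub cs J) ≤ Nat.card {w // J ⊆ cs.leftDescentSet w} := by
  have := Fintype.ofFinite W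
  let restrict : PSub cs J →ₗ[ℂ] ({w // J ⊆ cs.leftDescentSet w} → ℂ) :=
    { toFun := fun v w => v.1.coeff w
      map_add' := fun _ _ => rfl
      map_smul' := fun _ _ => rfl }
  have hinj : Function.Injective restrict := (injective_iff_map_eq_zero _).2 fun v hv =>
    Subtype.ext (eq_zero_of_mem_PSub cs v.2 fun w hw => congrFun hv ⟨w, hw⟩)
  calc finrank ℂ (PSub cs J) ≤ finrank ℂ ({w // J ⊆ cs.leftDescentSet w} → ℂ) :=
        LinearMap.finrank_le_finrank_of_injective hinj
    _ = _ := by rw [finrank_fintype_fun_eq_card, Nat.card_eq_fintype_card]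

theorem PSub_eq_span (J : Set B) :
    PSub cs J = span ℂ (descentVec cs '' {w | J ⊆ cs.leftDescentSet w}) := by
  have hle : span ℂ (descentVec cs '' {w | J ⊆ cs.leftDescentSet w}) ≤ PSub cs J := by
    rw [span_le]
    rintro _ ⟨w, hw, rfl⟩
    exact PSub_anti cs hw (signedCosetSum_mem_PSub cs _ w)
  refine (eq_of_le_of_finrank_le hle ?_).symm
  rw [finrank_span_descentVec]
  exact finrank_PSub_le cs J

theorem QSub_eq_span (I : Set B) :
    QSub cs I = span ℂ (descentVec cs '' {w | I ⊂ cs.leftDescentSet w}) := by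
  apply le_antisymm
  · refine iSup₂_le fun J hJ => ?_
    rw [PSub_eq_span]
    exact span_mono (Set.image_mono fun w (hw : J ⊆ _) => hJ.trans_subset hw)
  · rw [span_le]
    rintro _ ⟨w, hw, rfl⟩
    exact le_iSup₂ (f := fun J (_ : I ⊂ J) => PSub cs J) _ hw (signedCosetSum_mem_PSub cs _ w)

end Finite

end

/-- for `W` finite, `Q_I ⊆ P_I`, and the dimension of the quotient
`P_I / Q_I` is the number of `w ∈ W` with `D_L(w) = I`. -/
theorem finrank_PSub_quotient_QSub (cs : CoxeterSystem M W) [Finite W] (I : Set B) :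
    QSub cs I ≤ PSub cs I ∧
    Module.finrank ℂ
        (PSub cs I ⧸ Submodule.comap (PSub cs I).subtype (QSub cs I)) =
      Nat.card {w : W // {i : B | cs.IsLeftDescent w i} = I} := by
  have hQP := QSub_le_PSub cs I
  refine ⟨hQP, ?_⟩
  have hP : finrank ℂ (PSub cs I) = Nat.card {w // I ⊆ cs.leftDescentSet w} := by
    rw [PSub_eq_span, finrank_span_descentVec]
    rfl
  have hQ : finrank ℂ (QSub cs I) = Nat.card {w // I ⊂ cs.leftDescentSet w} := by
    rw [QSub_eq_span, finrank_span_descentVec]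
    rfl
  have hquot := finrank_quotient_add_finrank (comap (PSub cs I).subtype (QSub cs I))
  rw [(comapSubtypeEquivOfLe hQP).finrank_eq, hP, hQ,
    Nat.card_subset_eq_card_ssubset_add_card_eq] at hquot
  change _ = Nat.card {w // cs.leftDescentSet w = I}
  omega

end HGA
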